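/- arXiv:2206.06525 — 6 statements merged into one kernel-verified Lean document; each statement's English description precedes it below -/
import Mathlib

section
/- Let p > 3 be a prime with p ≡ -1 (mod 6), q an odd power of p, and F a field containing F_q. For any point P = (x, y) on the curve y² = x³ + t^q − t with x, y ∈ F(t), the order of the pole of x at the place at infinity of F(t) is at least (q+1)/3; equivalently ord_∞(x) ≤ −(q+1)/3. -/
/-!
Comparing degrees in `y² = x³ + (t^q − t)`: if `3 · deg x < q` then the right-hand side has
degree `q`, which is odd, while `y²` has even degree. Hence `q ≤ 3 · deg x`, and equality is
impossible because `3 ∤ q`.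
-/

namespace RatFunc

variable {K : Type*} [Field K]

theorem intDegree_pow {x : RatFunc K} (hx : x ≠ 0) (n : ℕ) :
    (x ^ n).intDegree = n * x.intDegree := by
  induction n with
  | zero => simp
  | succ n ih =>
    rw [pow_succ, intDegree_mul (pow_ne_zero n hx) hx, ih]
    push_cast
    ring

theorem intDegree_add_eq_right {x y : RatFunc K} (hy : y ≠ 0)
    (hxy : x = 0 ∨ x.intDegree < y.intDegree) : (x + y).intDegree = y.intDegree := by
  by_cases hx : x = 0
  · rw [hx, zero_add]
  have hlt := hxy.resolve_left hx
  have hsum : x + y ≠ 0 := by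
    intro h
    rw [eq_neg_of_add_eq_zero_right h, intDegree_neg] at hlt
    exact lt_irrefl _ hlt
  refine le_antisymm ((intDegree_add_le hy hsum).trans (max_le hlt.le le_rfl)) ?_
  have hle := intDegree_add_le (x := x + y) (neg_ne_zero.mpr hx) (by simpa using hy)
  rw [add_neg_cancel_comm, intDegree_neg] at hle
  exact (le_max_iff.mp hle).resolve_right hlt.not_ge

theorem intDegree_X_pow_sub_X {q : ℕ} (hq : 1 < q) :
    (X ^ q - X : RatFunc K).intDegree = q := by
  have hdeg : (Polynomial.X ^ q - Polynomial.X : Polynomial K).natDegree = q := by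
    rw [Polynomial.natDegree_sub_eq_left_of_natDegree_lt] <;> simp [hq]
  have hpoly : (X ^ q - X : RatFunc K) =
      algebraMap (Polynomial K) (RatFunc K) (Polynomial.X ^ q - Polynomial.X) := by
    simp [algebraMap_X]
  rw [hpoly, intDegree_polynomial, hdeg]

theorem le_three_mul_intDegree_of_sq_eq_cube_add {x y f : RatFunc K}
    (hf : Odd f.intDegree) (hxy : y ^ 2 = x ^ 3 + f) : f.intDegree ≤ 3 * x.intDegree := by
  by_contra! hlt
  have hf0 : f ≠ 0 := by
    rintro rfl
    simp at hf
  have hcube : x ^ 3 = 0 ∨ (x ^ 3).intDegree < f.intDegree := by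
    by_cases hx : x = 0
    · simp [hx]
    · exact Or.inr (by rwa [intDegree_pow hx])
  have hy_deg : (y ^ 2).intDegree = f.intDegree := by rw [hxy, intDegree_add_eq_right hf0 hcube]
  have hy : y ≠ 0 := by
    rintro rfl
    rw [zero_pow two_ne_zero, intDegree_zero] at hy_deg
    exact Int.not_even_iff_odd.mpr hf (hy_deg ▸ Even.zero)
  rw [intDegree_pow hy] at hy_deg
  exact Int.not_even_iff_odd.mpr hf ⟨y.intDegree, by rw [← hy_deg]; push_cast; ring⟩

end RatFunc

theorem Nat.pow_mod_six_of_odd {p c : ℕ} (hp : p % 6 = 5) (hc : Odd c) : p ^ c % 6 = 5 := by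
  obtain ⟨k, rfl⟩ := hc
  rw [Nat.pow_mod, hp, pow_succ, pow_mul, Nat.mul_mod, Nat.pow_mod]
  norm_num

theorem pole_order_at_infinity_general (p c q : ℕ) (hp6 : p % 6 = 5)
    (hc : Odd c) (hq : q = p ^ c)
    (F : Type*) [Field F]
    (x y : RatFunc F)
    (hxy : y ^ 2 = x ^ 3 + (RatFunc.X ^ q - RatFunc.X)) :
    (q + 1 : ℤ) ≤ 3 * x.intDegree := by
  have hq6 : q % 6 = 5 := hq ▸ Nat.pow_mod_six_of_odd hp6 hc
  have hdeg := RatFunc.intDegree_X_pow_sub_X (K := F) (q := q) (by omega)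
  have hle := RatFunc.le_three_mul_intDegree_of_sq_eq_cube_add
    (hdeg ▸ Int.odd_iff.mpr (by omega)) hxy
  omega

/-- For `p > 3` prime with `p ≡ -1 (mod 6)`, `q` an odd power of `p`, and `F`
a field containing `F_q`, any point `(x, y)` on `y² = x³ + t^q − t` with `x, y ∈ F(t)` has
`ord_∞(x) ≤ −(q+1)/3`, i.e. `3 · intDegree x ≥ q + 1` (where `ord_∞ x = −intDegree x`). -/
theorem pole_order_at_infinity (p c q : ℕ) [Fact p.Prime] (hp3 : 3 < p) (hp6 : p % 6 = 5)
    (hc : Odd c) (hq : q = p ^ c)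
    (F : Type*) [Field F] [CharP F p] (φ : GaloisField p c →+* F)
    (x y : RatFunc F)
    (hxy : y ^ 2 = x ^ 3 + (RatFunc.X ^ q - RatFunc.X)) :
    (q + 1 : ℤ) ≤ 3 * x.intDegree :=
  pole_order_at_infinity_general p c q hp6 hc hq F x y hxy
end

section
/- With the hypotheses above, for any affine point P = (x, y) on y² = x³ + t^q − t over F(t), writing x = f/g with f, g ∈ F[t] coprime, one has deg(f) ≥ deg(g) + (q+1)/3; in particular the naive height h(P) := max(deg f, deg g) equals deg(f) and satisfies h(P) ≥ (q+1)/3. -/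
/-!
Write `N = f³ + (t^q - t) g³`, so that `y² = N / g³` with `N` and `g³` coprime. Unique
factorisation in `F[t]` then makes both `N` and `g³` squares up to units, so `deg N` and `deg g`
are even. Since `3 ∤ q`, the degrees `3 deg f` and `q + 3 deg g` differ; if the second were the
larger, `deg N = q + 3 deg g` would be odd because `q` is.
-/

open Polynomial

section

variable {K : Type*} [Field K]

theorem associated_sq_num_denom_of_sq_eq_div {a b : K[X]} (hb : b ≠ 0) (hab : IsCoprime a b)
    {y : RatFunc K} (hy : y ^ 2 = algebraMap K[X] (RatFunc K) a / algebraMap K[X] (RatFunc K) b) :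
    Associated (y.num ^ 2) a ∧ Associated (y.denom ^ 2) b := by
  have huv : IsCoprime (y.num ^ 2) (y.denom ^ 2) := y.isCoprime_num_denom.pow
  have hcross : y.num ^ 2 * b = a * y.denom ^ 2 := by
    apply RatFunc.algebraMap_injective K
    rw [← y.num_div_denom] at hy
    have := RatFunc.algebraMap_ne_zero hb
    have := RatFunc.algebraMap_ne_zero y.denom_ne_zero
    simp only [map_mul, map_pow]
    field_simp at hy
    linear_combination hy
  refine ⟨associated_of_dvd_dvd ?_ ?_, associated_of_dvd_dvd ?_ ?_⟩
  · exact huv.dvd_of_dvd_mul_left ⟨b, by linear_combination -hcross⟩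
  · exact hab.dvd_of_dvd_mul_left ⟨y.denom ^ 2, by linear_combination hcross⟩
  · exact huv.symm.dvd_of_dvd_mul_right ⟨a, by linear_combination hcross⟩
  · exact hab.symm.dvd_of_dvd_mul_right ⟨y.num ^ 2, by linear_combination -hcross⟩

theorem even_natDegree_of_associated_sq {a b : K[X]} (h : Associated (b ^ 2) a) :
    Even a.natDegree := by
  rw [← natDegree_eq_of_degree_eq (degree_eq_degree_of_associated h), natDegree_pow]
  exact even_two_mul _

theorem even_natDegree_of_sq_eq_cube_add {f g h : K[X]} (hg : g ≠ 0) (hfg : IsCoprime f g)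
    {y : RatFunc K}
    (hy : y ^ 2 = (algebraMap K[X] (RatFunc K) f / algebraMap K[X] (RatFunc K) g) ^ 3 +
      algebraMap K[X] (RatFunc K) h) :
    Even (f ^ 3 + h * g ^ 3).natDegree ∧ Even g.natDegree := by
  have hcop : IsCoprime (f ^ 3 + h * g ^ 3) (g ^ 3) := by
    simpa only [mul_comm h] using (hfg.pow (m := 3) (n := 3)).add_mul_left_left h
  have hy' : y ^ 2 = algebraMap K[X] (RatFunc K) (f ^ 3 + h * g ^ 3) /
      algebraMap K[X] (RatFunc K) (g ^ 3) := by
    have := RatFunc.algebraMap_ne_zero hg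
    rw [hy]
    simp only [map_add, map_mul, map_pow]
    field_simp
  obtain ⟨hnum, hdenom⟩ := associated_sq_num_denom_of_sq_eq_div (pow_ne_zero 3 hg) hcop hy'
  have hg3 := even_natDegree_of_associated_sq hdenom
  rw [natDegree_pow, Nat.even_mul] at hg3
  exact ⟨even_natDegree_of_associated_sq hnum, hg3.resolve_left (by decide)⟩

end

theorem three_mul_natDegree_add_lt_of_even {R : Type*} [CommSemiring R] [NoZeroDivisors R]
    {f g h : R[X]} (hg : g ≠ 0) (hh : Odd h.natDegree) (hh3 : ¬ 3 ∣ h.natDegree)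
    (hgev : Even g.natDegree) (hN : Even (f ^ 3 + h * g ^ 3).natDegree) :
    3 * g.natDegree + h.natDegree < 3 * f.natDegree := by
  have hh0 : h ≠ 0 := by rintro rfl; simp at hh
  have hhg : (h * g ^ 3).natDegree = h.natDegree + 3 * g.natDegree := by
    rw [natDegree_mul hh0 (pow_ne_zero _ hg), natDegree_pow]
  by_contra! hle
  have hlt : (f ^ 3).natDegree < (h * g ^ 3).natDegree := by
    rw [hhg, natDegree_pow]
    refine lt_of_le_of_ne (by omega) fun heq => hh3 ⟨f.natDegree - g.natDegree, by omega⟩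
  rw [natDegree_add_eq_right_of_natDegree_lt hlt, hhg] at hN
  exact Nat.not_even_iff_odd.2 (hh.add_even (hgev.mul_left 3)) hN

theorem naive_height_lower_bound_general (p c q : ℕ) [Fact p.Prime] (hp3 : 3 < p)
    (hc : Odd c) (hq : q = p ^ c)
    (F : Type*) [Field F]
    (f g : Polynomial F) (hg : g ≠ 0) (hfg : IsCoprime f g)
    (x y : RatFunc F)
    (hx : x = algebraMap (Polynomial F) (RatFunc F) f / algebraMap (Polynomial F) (RatFunc F) g)
    (hxy : y ^ 2 = x ^ 3 + (RatFunc.X ^ q - RatFunc.X)) :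
    3 * g.natDegree + (q + 1) ≤ 3 * f.natDegree ∧
      max f.natDegree g.natDegree = f.natDegree ∧
      q + 1 ≤ 3 * max f.natDegree g.natDegree := by
  have hp : p.Prime := Fact.out
  have hq_odd : Odd q := hq ▸ (hp.odd_of_ne_two (by omega)).pow
  have hq_three : ¬ 3 ∣ q := by
    rw [hq]
    intro h
    have := (Nat.prime_dvd_prime_iff_eq Nat.prime_three hp).1 (Nat.prime_three.dvd_of_dvd_pow h)
    omega
  have hdeg : (X ^ q - X : F[X]).natDegree = q :=
    FiniteField.X_pow_card_sub_X_natDegree_eq F (hq ▸ Nat.one_lt_pow hc.pos.ne' (by omega))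
  rw [hx, ← RatFunc.algebraMap_X, ← map_pow, ← map_sub] at hxy
  obtain ⟨hN, hg_even⟩ := even_natDegree_of_sq_eq_cube_add hg hfg hxy
  have := three_mul_natDegree_add_lt_of_even hg (by rwa [hdeg]) (by rwa [hdeg]) hg_even hN
  omega

/-- With the hypotheses of Statement 0, for any affine point `(x, y)` on
`y² = x³ + t^q − t` with `x = f/g`, `f, g` coprime, one has `deg f ≥ deg g + (q+1)/3`
(stated multiplied through by 3), the naive height `max(deg f, deg g)` equals `deg f`,
and the naive height is at least `(q+1)/3`. -/
theorem naive_height_lower_bound (p c q : ℕ) [Fact p.Prime] (hp3 : 3 < p) (hp6 : p % 6 = 5)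
    (hc : Odd c) (hq : q = p ^ c)
    (F : Type*) [Field F] [CharP F p] (φ : GaloisField p c →+* F)
    (f g : Polynomial F) (hg : g ≠ 0) (hfg : IsCoprime f g)
    (x y : RatFunc F)
    (hx : x = algebraMap (Polynomial F) (RatFunc F) f / algebraMap (Polynomial F) (RatFunc F) g)
    (hxy : y ^ 2 = x ^ 3 + (RatFunc.X ^ q - RatFunc.X)) :
    3 * g.natDegree + (q + 1) ≤ 3 * f.natDegree ∧
      max f.natDegree g.natDegree = f.natDegree ∧
      q + 1 ≤ 3 * max f.natDegree g.natDegree :=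
  naive_height_lower_bound_general p c q hp3 hc hq F f g hg hfg x y hx hxy
end

section
/- Let F be a field of characteristic p > 3 containing F_q, q an odd power of p. If x = f/g with f, g coprime polynomials in F[t], y ∈ F(t), and (x, y) lies on y² = x³ + t^q − t, then the polynomials f⁴ − 8fg³(t^q − t) and 4(gf³ + g⁴(t^q − t)) are coprime in F[t]. -/
open Polynomial

/-!
Write `s = t^q - t` and `h = f³ + g³s`, so that `x³ + s = h / g³` and the denominator is
`D = 4gh`. Since `36 f g⁴ s = f · D - 4g · N` for the numerator `N`, a common prime factor `τ`
of `N` and `D` divides `f` and `s` but not `g`. As `s` is separable, hence squarefree, `τ`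
divides `h` exactly once. But writing `y = a/b` in lowest terms, the curve equation reads
`a²g³ = b²h`, so `τ ∣ a`, hence `τ² ∣ b²h` with `τ ∤ b`, i.e. `τ² ∣ h`.
-/

section Duplication

variable {R : Type*} [CommRing R] {τ f g s : R}

theorem Prime.dvd_and_dvd_of_dvd_duplication (hτ : Prime τ) (h2 : IsUnit (2 : R))
    (h3 : IsUnit (3 : R)) (hfg : IsCoprime f g) (hN : τ ∣ f ^ 4 - 8 * f * g ^ 3 * s)
    (hD : τ ∣ 4 * (g * f ^ 3 + g ^ 4 * s)) :
    τ ∣ f ∧ τ ∣ s ∧ ¬τ ∣ g := by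
  have h4 : IsUnit (4 : R) := by convert h2.mul h2; norm_num
  have h36 : IsUnit (36 : R) := by convert (h2.mul h3).pow 2; norm_num
  have dvd_f (h : τ ∣ g ^ 3 * s) : τ ∣ f := by
    have : f ^ 4 = (f ^ 4 - 8 * f * g ^ 3 * s) + 8 * f * (g ^ 3 * s) := by ring
    exact hτ.dvd_of_dvd_pow (n := 4) (this ▸ dvd_add hN (h.mul_left _))
  have not_dvd_g : ¬τ ∣ g := fun hg => hτ.not_isUnit <|
    hfg.isUnit_of_dvd' (dvd_f (dvd_mul_of_dvd_left (dvd_pow hg three_ne_zero) s)) hg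
  have dvd_s (hf : τ ∣ f) : τ ∣ s := by
    have hgh : τ ∣ g * (f ^ 3 + g ^ 3 * s) := h4.dvd_mul_left.mp (by convert hD using 1; ring)
    have hh := (hτ.dvd_or_dvd hgh).resolve_left not_dvd_g
    have hg3s : τ ∣ g ^ 3 * s := (dvd_add_right (dvd_pow hf three_ne_zero)).mp hh
    exact (hτ.dvd_or_dvd hg3s).resolve_left (mt hτ.dvd_of_dvd_pow not_dvd_g)
  have hfgs : τ ∣ f * g ^ 4 * s := by
    have : 36 * (f * g ^ 4 * s) = f * (4 * (g * f ^ 3 + g ^ 4 * s))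
        - 4 * g * (f ^ 4 - 8 * f * g ^ 3 * s) := by ring
    exact h36.dvd_mul_left.mp (this ▸ dvd_sub (hD.mul_left f) (hN.mul_left (4 * g)))
  rcases hτ.dvd_or_dvd hfgs with hfg4 | hs
  · rcases hτ.dvd_or_dvd hfg4 with hf | hg
    · exact ⟨hf, dvd_s hf, not_dvd_g⟩
    · exact absurd (hτ.dvd_of_dvd_pow hg) not_dvd_g
  · exact ⟨dvd_f (dvd_mul_of_dvd_right hs _), hs, not_dvd_g⟩

variable [IsDomain R]

theorem Prime.not_sq_dvd_cube_add_cube_mul (hτ : Prime τ) (hf : τ ∣ f) (hg : ¬τ ∣ g)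
    (hs : Squarefree s) : ¬τ ^ 2 ∣ f ^ 3 + g ^ 3 * s := fun h =>
  hτ.not_isUnit <| hs τ <| by
    rw [← sq]
    refine hτ.pow_dvd_of_dvd_mul_left 2 (a := g ^ 3) (mt hτ.dvd_of_dvd_pow hg) ?_
    exact (dvd_add_right ((pow_dvd_pow_of_dvd hf 2).trans (pow_dvd_pow f (by norm_num)))).mp h

theorem Prime.sq_dvd_of_sq_mul_eq_sq_mul {a b h : R} (hτ : Prime τ) (hab : IsCoprime a b)
    (hg : ¬τ ∣ g) (hcurve : a ^ 2 * g ^ 3 = b ^ 2 * h) (hh : τ ∣ h) : τ ^ 2 ∣ h := by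
  have ha : τ ∣ a := hτ.dvd_of_dvd_pow <|
    (hτ.dvd_or_dvd (hcurve ▸ dvd_mul_of_dvd_right hh _)).resolve_right (mt hτ.dvd_of_dvd_pow hg)
  have hb : ¬τ ∣ b ^ 2 := fun hb =>
    hτ.not_isUnit (hab.isUnit_of_dvd' ha (hτ.dvd_of_dvd_pow hb))
  exact hτ.pow_dvd_of_dvd_mul_left 2 hb <|
    hcurve ▸ dvd_mul_of_dvd_left (pow_dvd_pow_of_dvd ha 2) _

end Duplication

theorem RatFunc.num_sq_mul_eq_denom_sq_mul {F : Type*} [Field F] {f g s : F[X]} {y : RatFunc F}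
    (hg : g ≠ 0) (hy : y ^ 2 = (algebraMap F[X] (RatFunc F) f / algebraMap F[X] (RatFunc F) g) ^ 3
      + algebraMap F[X] (RatFunc F) s) :
    y.num ^ 2 * g ^ 3 = y.denom ^ 2 * (f ^ 3 + g ^ 3 * s) := by
  apply IsFractionRing.injective F[X] (RatFunc F)
  have hg' := RatFunc.algebraMap_ne_zero hg
  have hb' := RatFunc.algebraMap_ne_zero y.denom_ne_zero
  rw [← RatFunc.num_div_denom y] at hy
  field_simp at hy
  simp only [map_mul, map_pow, map_add]
  linear_combination hy

theorem Polynomial.isUnit_natCast_of_prime_ne {F : Type*} [Field F] (p : ℕ) [CharP F p] {n : ℕ}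
    (hn : n.Prime) (hpn : p ≠ n) : IsUnit (n : F[X]) := by
  rw [← map_natCast C]
  exact isUnit_C.mpr (CharP.cast_ne_zero_of_ne_of_prime F hn hpn).isUnit

theorem duplication_no_cancellation_general (p c q : ℕ) [Fact p.Prime] (hp3 : 3 < p)
    (hc : Odd c) (hq : q = p ^ c)
    (F : Type*) [Field F] [CharP F p]
    (f g : Polynomial F) (hg : g ≠ 0) (hfg : IsCoprime f g)
    (x y : RatFunc F)
    (hx : x = algebraMap (Polynomial F) (RatFunc F) f / algebraMap (Polynomial F) (RatFunc F) g)
    (hxy : y ^ 2 = x ^ 3 + (RatFunc.X ^ q - RatFunc.X)) :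
    IsCoprime (f ^ 4 - 8 * f * g ^ 3 * (X ^ q - X))
      (4 * (g * f ^ 3 + g ^ 4 * (X ^ q - X))) := by
  have h2 : IsUnit (2 : F[X]) :=
    mod_cast isUnit_natCast_of_prime_ne p Nat.prime_two (by omega : p ≠ 2)
  have h3 : IsUnit (3 : F[X]) :=
    mod_cast isUnit_natCast_of_prime_ne p Nat.prime_three (by omega : p ≠ 3)
  have hsep : Squarefree (X ^ q - X : F[X]) :=
    (galois_poly_separable p q (hq ▸ dvd_pow_self p hc.pos.ne')).squarefree
  have hcurve : y.num ^ 2 * g ^ 3 = y.denom ^ 2 * (f ^ 3 + g ^ 3 * (X ^ q - X)) :=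
    RatFunc.num_sq_mul_eq_denom_sq_mul hg (by simpa [← hx, RatFunc.algebraMap_X] using hxy)
  have no_common_prime (τ : F[X]) (hτ : Prime τ)
      (hN : τ ∣ f ^ 4 - 8 * f * g ^ 3 * (X ^ q - X))
      (hD : τ ∣ 4 * (g * f ^ 3 + g ^ 4 * (X ^ q - X))) : False := by
    obtain ⟨hf, hs, hg⟩ := hτ.dvd_and_dvd_of_dvd_duplication h2 h3 hfg hN hD
    exact hτ.not_sq_dvd_cube_add_cube_mul hf hg hsep <|
      hτ.sq_dvd_of_sq_mul_eq_sq_mul y.isCoprime_num_denom hg hcurve <|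
        dvd_add (dvd_pow hf three_ne_zero) (dvd_mul_of_dvd_right hs _)
  refine isCoprime_of_prime_dvd (fun ⟨hN, hD⟩ => ?_) no_common_prime
  exact no_common_prime X prime_X (hN ▸ dvd_zero X) (hD ▸ dvd_zero X)

/-- For `F` of characteristic `p > 3` containing `F_q` (`q` an odd `p`-power),
if `x = f/g` with `f, g` coprime and `(x, y)` lies on `y² = x³ + t^q − t`, then the
numerator `f⁴ − 8fg³(t^q − t)` and denominator `4(gf³ + g⁴(t^q − t))` of the duplication
formula are coprime in `F[t]`. -/
theorem duplication_no_cancellation (p c q : ℕ) [Fact p.Prime] (hp3 : 3 < p)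
    (hc : Odd c) (hq : q = p ^ c)
    (F : Type*) [Field F] [CharP F p] (φ : GaloisField p c →+* F)
    (f g : Polynomial F) (hg : g ≠ 0) (hfg : IsCoprime f g)
    (x y : RatFunc F)
    (hx : x = algebraMap (Polynomial F) (RatFunc F) f / algebraMap (Polynomial F) (RatFunc F) g)
    (hxy : y ^ 2 = x ^ 3 + (RatFunc.X ^ q - RatFunc.X)) :
    IsCoprime (f ^ 4 - 8 * f * g ^ 3 * (X ^ q - X))
      (4 * (g * f ^ 3 + g ^ 4 * (X ^ q - X))) :=
  duplication_no_cancellation_general p c q hp3 hc hq F f g hg hfg x y hx hxy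
end

section
/- Let F be a field of characteristic p > 3 containing F_q, q an odd power of p, and let E: y² = x³ + t^q − t over F(t). For every affine point P on E with x-coordinate in lowest terms f/g, the naive height satisfies h(2P) = 4·h(P), where h(P) = deg(f). -/
/-!
Write `x(P) = f/g` and `y(P) = u/v` in lowest terms. The curve equation becomes
`u²g³ = v²(f³ + Ag³)` with `A = t^q - t`, and since both fractions are reduced, `v² ~ g³` and
`u² ~ f³ + Ag³`; in particular `deg g` and `deg (f³ + Ag³)` are even. As `deg A = q` is odd and
prime to `3`, the leading terms of `f³` and `Ag³` can neither cancel nor be dominated by `Ag³`,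
so `3 deg f > q + 3 deg g`. The duplication formula gives
`x(2P) = (f⁴ - 8Afg³) / (4g(f³ + Ag³))`, whose numerator therefore has degree `4 deg f`; it is
coprime to the denominator because `A` is squarefree (its derivative is `-1`) and `f³ + Ag³` is a
square up to a unit.
-/

open Polynomial

/-- The naive height of a point on an elliptic curve over `F(t)`: it is `0` at the point
at infinity, and `deg f` at an affine point with `x`-coordinate `f/g` in lowest terms. -/
noncomputable def naiveHeight {F : Type*} [Field F]
    {W : WeierstrassCurve.Affine (RatFunc F)} : W.Point → ℕ
  | .zero => 0
  | @WeierstrassCurve.Affine.Point.some _ _ _ x _ _ => x.num.natDegree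

theorem associated_of_mul_eq_mul_of_isCoprime {R : Type*} [CommRing R] [IsDomain R]
    {a b c d : R} (hab : IsCoprime a b) (hcd : IsCoprime c d) (hd : d ≠ 0)
    (h : a * d = b * c) : Associated b d ∧ Associated a c := by
  have hbd : Associated b d := associated_of_dvd_dvd
    (hab.symm.dvd_of_dvd_mul_left ⟨c, h⟩)
    (hcd.symm.dvd_of_dvd_mul_left ⟨a, by rw [mul_comm, ← h, mul_comm]⟩)
  refine ⟨hbd, ?_⟩
  obtain ⟨e, he⟩ := hbd
  have hb : b ≠ 0 := by rintro rfl; exact hd (by simpa using he.symm)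
  refine ⟨e, mul_left_cancel₀ hb ?_⟩
  rw [← h, ← he]
  ring

namespace WeierstrassCurve.Affine

variable {K : Type*} [Field K] (W : Affine K) [W.IsShortNF]

theorem equation_iff_of_isShortNF (x y : K) :
    W.Equation x y ↔ y ^ 2 = x ^ 3 + W.a₄ * x + W.a₆ := by
  simp [equation_iff, a₂_of_isShortNF]

theorem negY_of_isShortNF (x y : K) : W.negY x y = -y := by
  simp [negY]

theorem ne_negY_of_isShortNF {x y : K} (h2 : (2 : K) ≠ 0) (hy : y ≠ 0) : y ≠ W.negY x y := by
  rw [negY_of_isShortNF]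
  intro h
  exact hy ((mul_eq_zero.mp (by linear_combination h : 2 * y = 0)).resolve_left h2)

theorem addX_slope_self_of_isShortNF [DecidableEq K] {x y : K} (h2 : (2 : K) ≠ 0) (hy : y ≠ 0)
    (hE : W.Equation x y) :
    W.addX x x (W.slope x x y y) =
      (x ^ 4 - 2 * W.a₄ * x ^ 2 - 8 * W.a₆ * x + W.a₄ ^ 2) /
        (4 * (x ^ 3 + W.a₄ * x + W.a₆)) := by
  rw [equation_iff_of_isShortNF] at hE
  have hslope : W.slope x x y y = (3 * x ^ 2 + W.a₄) / (2 * y) := by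
    rw [slope_of_Y_ne rfl (W.ne_negY_of_isShortNF h2 hy), negY_of_isShortNF, a₁_of_isShortNF,
      a₂_of_isShortNF]
    ring
  have h4 : (4 : K) ≠ 0 := by rw [show (4 : K) = 2 * 2 by norm_num]; exact mul_ne_zero h2 h2
  rw [addX, hslope, a₁_of_isShortNF, a₂_of_isShortNF, ← hE]
  field_simp
  linear_combination (-32 * x) * hE

theorem addX_slope_self_div_of_a₄_eq_zero [DecidableEq K] {f g y : K} (h2 : (2 : K) ≠ 0)
    (hy : y ≠ 0) (hg : g ≠ 0) (ha₄ : W.a₄ = 0) (hE : W.Equation (f / g) y) :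
    W.addX (f / g) (f / g) (W.slope (f / g) (f / g) y y) =
      (f ^ 4 - 8 * W.a₆ * f * g ^ 3) / (4 * (g * (f ^ 3 + W.a₆ * g ^ 3))) := by
  rw [W.addX_slope_self_of_isShortNF h2 hy hE, ha₄,
    ← div_div_div_cancel_right₀ (pow_ne_zero 4 hg) (f ^ 4 - 8 * W.a₆ * f * g ^ 3)]
  congr 1 <;> field_simp <;> ring

end WeierstrassCurve.Affine

section

variable {F : Type*} [Field F] {f g A : F[X]}

theorem cube_add_mul_cube_ne_zero (hg : g ≠ 0) (hA : ¬ 3 ∣ A.natDegree) :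
    f ^ 3 + A * g ^ 3 ≠ 0 := by
  intro h
  have hA0 : A ≠ 0 := by rintro rfl; simp at hA
  have hdeg := congrArg natDegree (eq_neg_of_add_eq_zero_left h)
  rw [natDegree_pow, natDegree_neg, natDegree_mul hA0 (pow_ne_zero 3 hg), natDegree_pow] at hdeg
  omega

theorem natDegree_add_three_mul_lt_of_even (hg : g ≠ 0) (hA3 : ¬ 3 ∣ A.natDegree)
    (hAodd : Odd A.natDegree) (hS : Even (f ^ 3 + A * g ^ 3).natDegree)
    (hgev : Even g.natDegree) :
    A.natDegree + 3 * g.natDegree < 3 * f.natDegree := by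
  have hA0 : A ≠ 0 := by rintro rfl; simp at hA3
  have hdeg : (A * g ^ 3).natDegree = A.natDegree + 3 * g.natDegree := by
    rw [natDegree_mul hA0 (pow_ne_zero 3 hg), natDegree_pow]
  by_contra! hle
  have hlt : (f ^ 3).natDegree < (A * g ^ 3).natDegree := by
    rw [hdeg, natDegree_pow]; omega
  rw [natDegree_add_eq_right_of_natDegree_lt hlt, hdeg] at hS
  rcases hAodd with ⟨a, ha⟩
  rcases hS with ⟨s, hs⟩
  rcases hgev with ⟨k, hk⟩
  omega

theorem natDegree_pow_four_sub (h : A.natDegree + 3 * g.natDegree < 3 * f.natDegree) :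
    (f ^ 4 - 8 * A * f * g ^ 3).natDegree = 4 * f.natDegree := by
  have hle : (8 * A * f * g ^ 3).natDegree ≤ 0 + A.natDegree + f.natDegree + 3 * g.natDegree :=
    natDegree_mul_le_of_le (natDegree_mul_le_of_le (natDegree_mul_le_of_le
      (natDegree_ofNat 8).le le_rfl) le_rfl) natDegree_pow_le
  have hlt : (8 * A * f * g ^ 3).natDegree < (f ^ 4).natDegree := by
    rw [natDegree_pow]; omega
  rw [natDegree_sub_eq_left_of_natDegree_lt hlt, natDegree_pow]

theorem isCoprime_pow_four_sub_of_isCoprime (hfg : IsCoprime f g) :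
    IsCoprime (f ^ 4 - 8 * A * f * g ^ 3) g := by
  refine IsCoprime.of_add_mul_left_left (z := 8 * A * f * g ^ 2) ?_
  rw [show f ^ 4 - 8 * A * f * g ^ 3 + g * (8 * A * f * g ^ 2) = f ^ 4 by ring]
  exact hfg.pow_left

theorem isCoprime_pow_four_sub_cube_add (h3 : (3 : F) ≠ 0) (hA : Squarefree A)
    (hfg : IsCoprime f g) {u : F[X]} (hu : Associated (u ^ 2) (f ^ 3 + A * g ^ 3))
    (hS : f ^ 3 + A * g ^ 3 ≠ 0) :
    IsCoprime (f ^ 4 - 8 * A * f * g ^ 3) (f ^ 3 + A * g ^ 3) := by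
  -- A common prime factor `π` of `N = f⁴ - 8Afg³` and `S = f³ + Ag³` divides `fS - N = 9Afg³`,
  -- hence `A` and `f` (as `π ∤ g`); since `S` is a square up to a unit, `π²` then divides
  -- `S - f³ = Ag³`, hence `A`.
  refine isCoprime_of_prime_dvd (fun h => hS h.2) fun π hπ hπN hπS => ?_
  have hπf_of : π ∣ A * g ^ 3 → π ∣ f := fun h =>
    hπ.dvd_of_dvd_pow (n := 3) (by simpa using dvd_sub hπS h)
  have hπg : ¬ π ∣ g := fun hπg =>
    hπ.not_isUnit (hfg.isUnit_of_dvd' (hπf_of ((dvd_pow hπg three_ne_zero).mul_left A)) hπg)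
  have hπg3 : ¬ π ∣ g ^ 3 := fun h => hπg (hπ.dvd_of_dvd_pow h)
  have h9 : IsUnit (9 : F[X]) := by
    rw [← map_ofNat C 9, isUnit_C, show (9 : F) = 3 * 3 by norm_num]
    exact (mul_ne_zero h3 h3).isUnit
  have hπAf : π ∣ A * f := by
    have hdiff : π ∣ 9 * (A * f * g ^ 3) := by
      rw [show 9 * (A * f * g ^ 3) = f * (f ^ 3 + A * g ^ 3) - (f ^ 4 - 8 * A * f * g ^ 3) by ring]
      exact dvd_sub (hπS.mul_left f) hπN
    rcases hπ.dvd_or_dvd hdiff with h | h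
    · exact absurd (isUnit_of_dvd_unit h h9) hπ.not_isUnit
    · exact (hπ.dvd_or_dvd h).resolve_right hπg3
  have hπf : π ∣ f := by
    rcases hπ.dvd_or_dvd hπAf with hπA | hπf
    · exact hπf_of (hπA.mul_right _)
    · exact hπf
  have hπ2 : π ^ 2 ∣ A * g ^ 3 := by
    have hπu : π ∣ u := hπ.dvd_of_dvd_pow (hπS.trans hu.symm.dvd)
    rw [show A * g ^ 3 = f ^ 3 + A * g ^ 3 - f ^ 3 by ring]
    exact dvd_sub ((pow_dvd_pow_of_dvd hπu 2).trans hu.dvd)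
      ((pow_dvd_pow π (by norm_num)).trans (pow_dvd_pow_of_dvd hπf 3))
  exact hπ.not_isUnit (hA π (by rw [← sq]; exact hπ.pow_dvd_of_dvd_mul_right 2 hπg3 hπ2))

theorem RatFunc.num_sq_mul_denom_cube {x y : RatFunc F}
    (h : y ^ 2 = x ^ 3 + algebraMap F[X] (RatFunc F) A) :
    y.num ^ 2 * x.denom ^ 3 = y.denom ^ 2 * (x.num ^ 3 + A * x.denom ^ 3) := by
  apply RatFunc.algebraMap_injective F
  rw [← x.num_div_denom, ← y.num_div_denom] at h
  have hx := RatFunc.algebraMap_ne_zero x.denom_ne_zero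
  have hy := RatFunc.algebraMap_ne_zero y.denom_ne_zero
  simp only [map_mul, map_pow, map_add]
  field_simp at h
  linear_combination h

theorem RatFunc.associated_of_sq_eq_cube_add {x y : RatFunc F}
    (h : y ^ 2 = x ^ 3 + algebraMap F[X] (RatFunc F) A) :
    Associated (y.denom ^ 2) (x.denom ^ 3) ∧
      Associated (y.num ^ 2) (x.num ^ 3 + A * x.denom ^ 3) :=
  associated_of_mul_eq_mul_of_isCoprime y.isCoprime_num_denom.pow
    (x.isCoprime_num_denom.pow.add_mul_right_left A) (pow_ne_zero 3 x.denom_ne_zero)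
    (RatFunc.num_sq_mul_denom_cube h)

theorem RatFunc.natDegree_add_three_mul_lt_of_sq_eq (hA3 : ¬ 3 ∣ A.natDegree)
    (hAodd : Odd A.natDegree) {x y : RatFunc F}
    (h : y ^ 2 = x ^ 3 + algebraMap F[X] (RatFunc F) A) :
    A.natDegree + 3 * x.denom.natDegree < 3 * x.num.natDegree := by
  obtain ⟨hvg, huS⟩ := RatFunc.associated_of_sq_eq_cube_add h
  have hv := natDegree_eq_of_degree_eq (degree_eq_degree_of_associated hvg)
  have hu := natDegree_eq_of_degree_eq (degree_eq_degree_of_associated huS)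
  rw [natDegree_pow, natDegree_pow] at hv
  rw [natDegree_pow] at hu
  exact natDegree_add_three_mul_lt_of_even x.denom_ne_zero hA3 hAodd
    ⟨_, hu.symm.trans (two_mul _)⟩ (by rw [Nat.even_iff]; omega)

theorem RatFunc.natDegree_num_div_of_isCoprime {p q : F[X]} (h : IsCoprime p q) :
    (algebraMap F[X] (RatFunc F) p / algebraMap F[X] (RatFunc F) q).num.natDegree =
      p.natDegree := by
  classical
  have hgcd : gcd p q = 1 := by
    rw [← normalize_gcd, normalize_eq_one]
    exact (gcd_isUnit_iff p q).mpr h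
  rcases eq_or_ne q 0 with rfl | hq
  · simp [natDegree_eq_zero_of_isUnit (isCoprime_zero_right.mp h)]
  rw [RatFunc.num_div, hgcd, EuclideanDomain.div_one, EuclideanDomain.div_one,
    natDegree_C_mul (inv_ne_zero (leadingCoeff_ne_zero.mpr hq))]

theorem naiveHeight_some {W : WeierstrassCurve.Affine (RatFunc F)} {x y : RatFunc F}
    (h : W.Nonsingular x y) :
    naiveHeight (WeierstrassCurve.Affine.Point.some x y h) = x.num.natDegree := rfl

theorem naiveHeight_two_nsmul_of_isShortNF [DecidableEq (RatFunc F)] (h2 : (2 : F) ≠ 0)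
    (h3 : (3 : F) ≠ 0) (hA : Squarefree A) (hAodd : Odd A.natDegree) (hA3 : ¬ 3 ∣ A.natDegree)
    {W : WeierstrassCurve.Affine (RatFunc F)} [W.IsShortNF] (ha₄ : W.a₄ = 0)
    (ha₆ : W.a₆ = algebraMap F[X] (RatFunc F) A) {x y : RatFunc F} (h : W.Nonsingular x y) :
    naiveHeight (2 • WeierstrassCurve.Affine.Point.some x y h) =
      4 * naiveHeight (WeierstrassCurve.Affine.Point.some x y h) := by
  have hE : y ^ 2 = x ^ 3 + algebraMap F[X] (RatFunc F) A := by
    simpa [W.equation_iff_of_isShortNF, ha₄, ha₆] using h.1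
  set f := x.num
  set g := x.denom
  have hg0 : g ≠ 0 := x.denom_ne_zero
  have hfg : IsCoprime f g := x.isCoprime_num_denom
  have hS : f ^ 3 + A * g ^ 3 ≠ 0 := cube_add_mul_cube_ne_zero hg0 hA3
  have huS := (RatFunc.associated_of_sq_eq_cube_add hE).2
  have hlt := RatFunc.natDegree_add_three_mul_lt_of_sq_eq hA3 hAodd hE
  have hy : y ≠ 0 := by
    rintro rfl
    exact hS (by simpa using huS.symm)
  have h2K : (2 : RatFunc F) ≠ 0 := by
    rw [← map_ofNat (algebraMap F (RatFunc F)) 2]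
    exact (_root_.map_ne_zero _).mpr h2
  have hx2 : W.addX x x (W.slope x x y y) =
      algebraMap F[X] (RatFunc F) (f ^ 4 - 8 * A * f * g ^ 3) /
        algebraMap F[X] (RatFunc F) (4 * (g * (f ^ 3 + A * g ^ 3))) := by
    have hE' := h.1
    rw [← x.num_div_denom] at hE' ⊢
    rw [W.addX_slope_self_div_of_a₄_eq_zero h2K hy (RatFunc.algebraMap_ne_zero hg0) ha₄ hE',
      ha₆]
    simp only [map_sub, map_mul, map_pow, map_ofNat, map_add]
    rfl
  have h4 : IsUnit (4 : F[X]) := by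
    rw [← map_ofNat C 4, isUnit_C, show (4 : F) = 2 * 2 by norm_num]
    exact (mul_ne_zero h2 h2).isUnit
  rw [two_nsmul, WeierstrassCurve.Affine.Point.add_self_of_Y_ne (W.ne_negY_of_isShortNF h2K hy),
    naiveHeight_some, naiveHeight_some, hx2, RatFunc.natDegree_num_div_of_isCoprime,
    natDegree_pow_four_sub hlt]
  exact (isCoprime_mul_unit_left_right h4 _ _).mpr
    ((isCoprime_pow_four_sub_of_isCoprime hfg).mul_right
      (isCoprime_pow_four_sub_cube_add h3 hA hfg huS hS))

end

open Classical in
theorem naive_height_duplication_general (p c q : ℕ) [Fact p.Prime] (hp3 : 3 < p)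
    (hc : Odd c) (hq : q = p ^ c)
    (F : Type*) [Field F] [CharP F p]
    (W : WeierstrassCurve.Affine (RatFunc F))
    (hW : W = ⟨0, 0, 0, 0,
      algebraMap (Polynomial F) (RatFunc F) (X ^ q - X)⟩)
    (x y : RatFunc F) (h : W.Nonsingular x y) :
    naiveHeight (2 • (WeierstrassCurve.Affine.Point.some x y h : W.Point)) =
      4 * naiveHeight (WeierstrassCurve.Affine.Point.some x y h : W.Point) := by
  subst hW hq
  have hp := Fact.out (p := p.Prime)
  have hcast : ∀ n : ℕ, 0 < n → n < p → (n : F) ≠ 0 := fun n hn hnp h0 =>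
    absurd (Nat.le_of_dvd hn ((CharP.cast_eq_zero_iff F p n).mp h0)) (by omega)
  have hdeg : (X ^ p ^ c - X : F[X]).natDegree = p ^ c :=
    FiniteField.X_pow_card_pow_sub_X_natDegree_eq F hc.pos.ne' hp.one_lt
  have : WeierstrassCurve.IsShortNF (⟨0, 0, 0, 0, algebraMap F[X] (RatFunc F) (X ^ p ^ c - X)⟩ :
      WeierstrassCurve.Affine (RatFunc F)) := ⟨rfl, rfl, rfl⟩
  refine naiveHeight_two_nsmul_of_isShortNF (by exact_mod_cast hcast 2 two_pos (by omega))
    (by exact_mod_cast hcast 3 three_pos hp3)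
    (galois_poly_separable p _ (dvd_pow_self p hc.pos.ne')).squarefree ?_ ?_ rfl rfl h
  · rw [hdeg]
    exact (hp.odd_of_ne_two (by omega)).pow
  · rw [hdeg]
    intro h3
    have := (Nat.prime_dvd_prime_iff_eq Nat.prime_three hp).mp (Nat.prime_three.dvd_of_dvd_pow h3)
    omega

open Classical in
/-- For `F` of characteristic `p > 3` containing `F_q` (`q` an odd `p`-power)
and `E : y² = x³ + t^q − t` over `F(t)`, every affine point `P` satisfies
`h(2P) = 4·h(P)`, where `h` is the naive height. -/
theorem naive_height_duplication (p c q : ℕ) [Fact p.Prime] (hp3 : 3 < p)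
    (hc : Odd c) (hq : q = p ^ c)
    (F : Type*) [Field F] [CharP F p] (φ : GaloisField p c →+* F)
    (W : WeierstrassCurve.Affine (RatFunc F))
    (hW : W = ⟨0, 0, 0, 0,
      algebraMap (Polynomial F) (RatFunc F) (X ^ q - X)⟩)
    (x y : RatFunc F) (h : W.Nonsingular x y) :
    naiveHeight (2 • (WeierstrassCurve.Affine.Point.some x y h : W.Point)) =
      4 * naiveHeight (WeierstrassCurve.Affine.Point.some x y h : W.Point) :=
  naive_height_duplication_general p c q hp3 hc hq F W hW x y h
end

section
/- Let d ≥ 2 be even, p an odd prime, and K = F_p(μ_d, u) with ζ a primitive d-th root of unity. For each i ∈ {0, 1, …, d−1}, the point P_i = (ζ^i u, ζ^i u (ζ^i u + 1)^{d/2}) lies on the Legendre curve y² = x(x + 1)(x + t), where t = u^d. -/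
/-- For `p` an odd prime, `d = p^f + 1` (even, `d ≥ 2`), and `ζ` a primitive
`d`-th root of unity in a field `F` of characteristic `p` (so that `F ⊇ F_p(μ_d)`), each
point `P_i = (ζ^i u, ζ^i u (ζ^i u + 1)^(d/2))`, `0 ≤ i ≤ d − 1`, lies on the Legendre
curve `y² = x(x + 1)(x + t)` over `F(u)`, where `t = u^d`. -/
theorem legendre_explicit_points (p f d : ℕ) (hp : p.Prime) (hodd : Odd p)
    (hf : 1 ≤ f) (hd : d = p ^ f + 1) (hd2 : 2 ≤ d) (hdeven : Even d)
    (F : Type*) [Field F] [CharP F p] (ζ : F) (hζ : IsPrimitiveRoot ζ d)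
    (i : ℕ) (hi : i < d) :
    (RatFunc.C (ζ ^ i) * RatFunc.X *
        (RatFunc.C (ζ ^ i) * RatFunc.X + 1) ^ (d / 2)) ^ 2 =
      (RatFunc.C (ζ ^ i) * RatFunc.X) * (RatFunc.C (ζ ^ i) * RatFunc.X + 1) *
        (RatFunc.C (ζ ^ i) * RatFunc.X + RatFunc.X ^ d) := by
  haveI : CharP (RatFunc F) p :=
    charP_of_injective_algebraMap (algebraMap F (RatFunc F)).injective p
  set x : RatFunc F := RatFunc.C (ζ ^ i) * RatFunc.X with hx
  have hxd : x ^ d = RatFunc.X ^ d := by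
    rw [hx, mul_pow, ← map_pow, ← pow_mul, mul_comm i d, pow_mul, hζ.pow_eq_one,
      one_pow, map_one, one_mul]
  have hfrob : (x + 1) ^ (p ^ f) = x ^ (p ^ f) + 1 := by
    haveI : Fact p.Prime := ⟨hp⟩; simpa using add_pow_char_pow x 1 p f
  have hkey : x * (x + 1) ^ (d - 1) = x + RatFunc.X ^ d := by
    have hd1 : d - 1 = p ^ f := by omega
    rw [hd1, hfrob, mul_add, mul_one, ← pow_succ', ← hd, hxd, add_comm]
  have hsplit : (x + 1) ^ d = (x + 1) ^ (d - 1) * (x + 1) := by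
    rw [← pow_succ]; congr 1; omega
  calc (x * (x + 1) ^ (d / 2)) ^ 2
      = x * (x + 1) * (x * (x + 1) ^ (d - 1)) := by
        rw [mul_pow, ← pow_mul, Nat.div_mul_cancel hdeven.two_dvd, hsplit]; ring
    _ = x * (x + 1) * (x + RatFunc.X ^ d) := by rw [hkey]
end

section
/- Let d ≥ 4 be even and let G be the d × d matrix with diagonal entries (d−1)(d−2)/(2d) and off-diagonal entries (1−d)/d when i − j is even and 0 when i − j is odd. Then G has rank d − 2; equivalently, its kernel over ℚ is 2-dimensional, spanned by the all-ones vectors on the even-index and odd-index coordinates respectively. -/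
/-
Splitting off the diagonal, `G = ((d - 1) / 2) • 1 + ((1 - d) / d) • (e eᵀ + o oᵀ)`, where `e` and
`o` are the indicator vectors of the even and odd indices. These are orthogonal with
`e ⬝ᵥ e = o ⬝ᵥ o = d / 2`, so `G` acts on `span {e, o}` by the scalar
`(d - 1) / 2 + ((1 - d) / d) * (d / 2) = 0` and on its orthogonal complement by `(d - 1) / 2 ≠ 0`.
-/

open Matrix

lemma Finset.sum_range_two_mul_ite_even {M : Type*} [AddCommMonoid M] (m : ℕ) (x y : M) :
    ∑ j ∈ range (2 * m), (if Even j then x else y) = m • (x + y) := by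
  induction m with
  | zero => simp
  | succ m ih =>
    rw [mul_add_one, sum_range_succ, sum_range_succ, ih, succ_nsmul, add_assoc]
    simp [parity_simps]

section RankTwoPerturbation

variable {K ι : Type*} [Field K] [Fintype ι]

lemma linearIndependent_pair_of_dotProduct {u w : ι → K} (hu : u ⬝ᵥ u ≠ 0) (hw : w ⬝ᵥ w ≠ 0)
    (huw : u ⬝ᵥ w = 0) : LinearIndependent K ![u, w] := by
  rw [LinearIndependent.pair_iff]
  intro s t h
  have hs := congrArg (u ⬝ᵥ ·) h
  have ht := congrArg (w ⬝ᵥ ·) h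
  simp only [dotProduct_add, dotProduct_smul, huw, dotProduct_comm w u, smul_eq_mul,
    dotProduct_zero, mul_zero, add_zero, zero_add] at hs ht
  exact ⟨(mul_eq_zero.mp hs).resolve_right hu, (mul_eq_zero.mp ht).resolve_right hw⟩

lemma finrank_span_pair_of_dotProduct {u w : ι → K} (hu : u ⬝ᵥ u ≠ 0) (hw : w ⬝ᵥ w ≠ 0)
    (huw : u ⬝ᵥ w = 0) : Module.finrank K (Submodule.span K {u, w}) = 2 := by
  have := finrank_span_eq_card (linearIndependent_pair_of_dotProduct hu hw huw)
  rwa [range_cons, range_cons_empty, Set.singleton_union, Fintype.card_fin] at this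

variable [DecidableEq ι]

lemma smul_one_add_smul_vecMulVec_mulVec (b c : K) (u w v : ι → K) :
    (c • 1 + b • (vecMulVec u u + vecMulVec w w)) *ᵥ v =
      c • v + b • ((u ⬝ᵥ v) • u + (w ⬝ᵥ v) • w) := by
  ext i
  simp [add_mulVec, smul_mulVec, vecMulVec_mulVec, mul_comm]

theorem ker_smul_one_add_smul_vecMulVec {u w : ι → K} {b c m : K} (hu : u ⬝ᵥ u = m)
    (hw : w ⬝ᵥ w = m) (huw : u ⬝ᵥ w = 0) (hc : c ≠ 0) (hcbm : c + b * m = 0) :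
    LinearMap.ker (c • 1 + b • (vecMulVec u u + vecMulVec w w)).mulVecLin =
      Submodule.span K {u, w} := by
  apply le_antisymm
  · intro v hv
    rw [LinearMap.mem_ker, mulVecLin_apply, smul_one_add_smul_vecMulVec_mulVec] at hv
    have hcv := eq_neg_of_add_eq_zero_left hv
    refine Submodule.mem_span_pair.mpr ⟨-(b / c) * (u ⬝ᵥ v), -(b / c) * (w ⬝ᵥ v), ?_⟩
    calc (-(b / c) * (u ⬝ᵥ v)) • u + (-(b / c) * (w ⬝ᵥ v)) • w = c⁻¹ • (c • v) := by
          rw [hcv]; module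
      _ = v := inv_smul_smul₀ hc v
  · have hwu : w ⬝ᵥ u = 0 := by rw [dotProduct_comm, huw]
    simp only [Submodule.span_le, Set.insert_subset_iff, Set.singleton_subset_iff, SetLike.mem_coe,
      LinearMap.mem_ker, mulVecLin_apply, smul_one_add_smul_vecMulVec_mulVec, hu, hw, huw, hwu,
      zero_smul, add_zero, zero_add, smul_smul, ← add_smul, hcbm, and_self]

end RankTwoPerturbation

section Parity

variable (R : Type*) [Semiring R]

def evenIndicator (d : ℕ) : Fin d → R := fun i => if Even (i : ℕ) then 1 else 0

def oddIndicator (d : ℕ) : Fin d → R := fun i => if Even (i : ℕ) then 0 else 1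

lemma evenIndicator_dotProduct_self (m : ℕ) :
    evenIndicator R (2 * m) ⬝ᵥ evenIndicator R (2 * m) = m :=
  calc evenIndicator R (2 * m) ⬝ᵥ evenIndicator R (2 * m)
      = ∑ j ∈ Finset.range (2 * m), if Even j then (1 : R) else 0 := by
        rw [← Fin.sum_univ_eq_sum_range (fun j => if Even j then (1 : R) else 0)]
        exact Finset.sum_congr rfl fun i _ => by unfold evenIndicator; split_ifs <;> simp
    _ = m := by rw [Finset.sum_range_two_mul_ite_even]; simp

lemma oddIndicator_dotProduct_self (m : ℕ) :
    oddIndicator R (2 * m) ⬝ᵥ oddIndicator R (2 * m) = m :=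
  calc oddIndicator R (2 * m) ⬝ᵥ oddIndicator R (2 * m)
      = ∑ j ∈ Finset.range (2 * m), if Even j then (0 : R) else 1 := by
        rw [← Fin.sum_univ_eq_sum_range (fun j => if Even j then (0 : R) else 1)]
        exact Finset.sum_congr rfl fun i _ => by unfold oddIndicator; split_ifs <;> simp
    _ = m := by rw [Finset.sum_range_two_mul_ite_even]; simp

lemma evenIndicator_dotProduct_oddIndicator (d : ℕ) :
    evenIndicator R d ⬝ᵥ oddIndicator R d = 0 :=
  Finset.sum_eq_zero fun i _ => by
    by_cases h : Even (i : ℕ) <;> simp [evenIndicator, oddIndicator, h]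

end Parity

lemma eq_smul_one_add_smul_parity_vecMulVec {R : Type*} [CommRing R] {d : ℕ} {a b : R}
    {G : Matrix (Fin d) (Fin d) R}
    (hG : ∀ i j, G i j = if i = j then a else if Even ((i : ℤ) - (j : ℤ)) then b else 0) :
    G = (a - b) • 1 + b • (vecMulVec (evenIndicator R d) (evenIndicator R d) +
      vecMulVec (oddIndicator R d) (oddIndicator R d)) := by
  ext i j
  have hpar : Even ((i : ℤ) - (j : ℤ)) ↔ (Even (i : ℕ) ↔ Even (j : ℕ)) := by
    simp [Int.even_sub, Int.even_coe_nat]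
  by_cases hij : i = j
  · subst hij
    by_cases h : Even (i : ℕ) <;> simp [hG, evenIndicator, oddIndicator, vecMulVec_apply, h]
  · by_cases hi : Even (i : ℕ) <;> by_cases hj : Even (j : ℕ) <;>
      simp [hG, evenIndicator, oddIndicator, vecMulVec_apply, hij, hpar, hi, hj, one_apply_ne hij]

/-- For even `d ≥ 4`, the `d × d` Gram matrix `G` of the explicit points on
the Legendre curve (diagonal entries `(d−1)(d−2)/(2d)`, off-diagonal entries `(1−d)/d`
when `i − j` is even and `0` when `i − j` is odd) has rank `d − 2`, and its kernel over
`ℚ` is spanned by the indicator vectors of the even-index and odd-index coordinates. -/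
theorem gram_matrix_rank (d : ℕ) (hd : 4 ≤ d) (hde : Even d)
    (G : Matrix (Fin d) (Fin d) ℚ)
    (hG : ∀ i j, G i j =
      if i = j then ((d : ℚ) - 1) * ((d : ℚ) - 2) / (2 * d)
      else if Even ((i : ℤ) - (j : ℤ)) then (1 - (d : ℚ)) / d
      else 0) :
    G.rank = d - 2 ∧
      LinearMap.ker G.mulVecLin = Submodule.span ℚ
        {(fun i => if Even (i : ℕ) then 1 else 0 : Fin d → ℚ),
         (fun i => if Even (i : ℕ) then 0 else 1 : Fin d → ℚ)} := by
  obtain ⟨m, rfl⟩ : ∃ m, d = 2 * m := hde.exists_two_nsmul d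
  have hm : (1 : ℚ) ≤ m := by exact_mod_cast (by omega : 1 ≤ m)
  push_cast at hG
  have hdiag : (2 * m - 1 : ℚ) * (2 * m - 2) / (2 * (2 * m)) - (1 - 2 * m) / (2 * m) =
      (2 * m - 1) / 2 := by
    field_simp
    ring
  have hker : LinearMap.ker G.mulVecLin =
      Submodule.span ℚ {evenIndicator ℚ (2 * m), oddIndicator ℚ (2 * m)} := by
    rw [eq_smul_one_add_smul_parity_vecMulVec hG, hdiag]
    refine ker_smul_one_add_smul_vecMulVec (evenIndicator_dotProduct_self ℚ m)
      (oddIndicator_dotProduct_self ℚ m) (evenIndicator_dotProduct_oddIndicator ℚ _)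
      (by linarith) ?_
    field_simp
    ring
  have hm0 : (m : ℚ) ≠ 0 := by positivity
  have hrank := LinearMap.finrank_range_add_finrank_ker G.mulVecLin
  rw [hker, Module.finrank_fin_fun, finrank_span_pair_of_dotProduct
    (by rwa [evenIndicator_dotProduct_self]) (by rwa [oddIndicator_dotProduct_self])
    (evenIndicator_dotProduct_oddIndicator ℚ _)] at hrank
  exact ⟨(Nat.sub_eq_of_eq_add hrank.symm).symm, hker⟩
end
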